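/- Fix λ > 0 and consider the penalized Boolean relaxation min_{s ∈ [0,1]^p} sup_{α ∈ ℝ^n} (f(α,s) + λ Σ_j s_j). If there exists a saddle point (ᾱ, s̄) — meaning s̄ ∈ [0,1]^p and f(α, s̄) + λ Σ_j s̄_j ≤ f(ᾱ, s̄) + λ Σ_j s̄_j ≤ f(ᾱ, s) + λ Σ_j s_j for all α ∈ ℝ^n and all s ∈ [0,1]^p — such that λ − (γ/2)(X_jᵀᾱ)² ≠ 0 for every j = 1,…,p, then the relaxation is tight: s̄ ∈ {0,1}^p and inf_{s ∈ [0,1]^p} sup_{α} (f(α,s) + λ Σ_j s_j) = inf_{s ∈ {0,1}^p} sup_{α} (f(α,s) + λ Σ_j s_j). -/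

import Mathlib

/-!
On the box `[0,1]^p` the objective `s ↦ f(ᾱ, s) + λ ∑ⱼ sⱼ` is affine with coefficients
`λ - (γ/2)(Xⱼᵀᾱ)²`, and the saddle condition says that `s̄` minimizes it. When no coefficient
vanishes, a minimizer of a linear function over a box sits at a vertex, so `s̄` is Boolean; being
the minimizer of `s ↦ sup_α (f(α, s) + λ ∑ⱼ sⱼ)` over the box, it is then also the minimizer over
`{0,1}^p`. The only delicate point is finiteness: the conjugates are `> ⊥`, and since a convex
`ℓ(yᵢ, ·)` has a subgradient at `0`, some `α` makes `f(α, s̄)` finite, which the first saddle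
inequality transfers to `ᾱ`.
-/

open Set

theorem ConvexOn.exists_subgradient {S : Set ℝ} {φ : ℝ → ℝ} (hφ : ConvexOn ℝ S φ) {x : ℝ}
    (hx : x ∈ interior S) : ∃ a : ℝ, ∀ y ∈ S, φ x + a * (y - x) ≤ φ y := by
  refine ⟨derivWithin φ (Ioi x) x, fun y hy => ?_⟩
  rcases lt_trichotomy y x with hyx | rfl | hxy
  · have h := (hφ.slope_le_leftDeriv_of_mem_interior hy hx hyx).trans
      (hφ.leftDeriv_le_rightDeriv_of_mem_interior hx)
    rw [slope_def_field, div_le_iff₀ (sub_pos.2 hyx)] at h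
    linarith
  · simp
  · have h := hφ.rightDeriv_le_slope_of_mem_interior hx hy hxy
    rw [slope_def_field, le_div_iff₀ (sub_pos.2 hxy)] at h
    linarith

theorem EReal.coe_finset_sum {ι : Type*} (s : Finset ι) (g : ι → ℝ) :
    ((∑ i ∈ s, g i : ℝ) : EReal) = ∑ i ∈ s, (g i : EReal) :=
  map_sum (⟨⟨(↑), EReal.coe_zero⟩, EReal.coe_add⟩ : ℝ →+ EReal) g s

noncomputable def fenchelConj (φ : ℝ → ℝ) (a : ℝ) : EReal :=
  ⨆ u : ℝ, ((u * a - φ u : ℝ) : EReal)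

theorem coe_le_fenchelConj (φ : ℝ → ℝ) (a u : ℝ) :
    ((u * a - φ u : ℝ) : EReal) ≤ fenchelConj φ a :=
  le_iSup (fun u : ℝ => ((u * a - φ u : ℝ) : EReal)) u

theorem fenchelConj_eq_of_subgradient {φ : ℝ → ℝ} {a x : ℝ}
    (h : ∀ y, φ x + a * (y - x) ≤ φ y) : fenchelConj φ a = ((x * a - φ x : ℝ) : EReal) :=
  le_antisymm (iSup_le fun u => EReal.coe_le_coe_iff.2 (by linarith [h u]))
    (coe_le_fenchelConj φ a x)

theorem sum_fenchelConj_ne_bot {ι : Type*} [Fintype ι] (φ : ι → ℝ → ℝ) (α : ι → ℝ) :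
    ∑ i, fenchelConj (φ i) (α i) ≠ ⊥ := by
  refine ne_bot_of_le_ne_bot (EReal.coe_ne_bot (∑ i, -φ i 0)) ?_
  rw [EReal.coe_finset_sum]
  exact Finset.sum_le_sum fun i _ => by simpa using coe_le_fenchelConj (φ i) (α i) 0

theorem exists_sum_fenchelConj_eq_coe {ι : Type*} [Fintype ι] {φ : ι → ℝ → ℝ}
    (hφ : ∀ i, ConvexOn ℝ univ (φ i)) :
    ∃ (α : ι → ℝ) (r : ℝ), ∑ i, fenchelConj (φ i) (α i) = r := by
  choose α hα using fun i => (hφ i).exists_subgradient (x := 0) (by simp)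
  refine ⟨α, ∑ i, -φ i 0, ?_⟩
  rw [EReal.coe_finset_sum]
  exact Finset.sum_congr rfl fun i _ => by
    simpa using fenchelConj_eq_of_subgradient fun y => hα i y (mem_univ y)

theorem eq_zero_or_eq_one_of_minimizes_linear {ι : Type*} [Fintype ι] {c s₀ : ι → ℝ}
    (hc : ∀ j, c j ≠ 0) (hs₀ : ∀ j, 0 ≤ s₀ j ∧ s₀ j ≤ 1)
    (hmin : ∀ s : ι → ℝ, (∀ j, 0 ≤ s j ∧ s j ≤ 1) → ∑ j, c j * s₀ j ≤ ∑ j, c j * s j)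
    (j : ι) : s₀ j = 0 ∨ s₀ j = 1 := by
  classical
  have hmove : ∀ v : ℝ, 0 ≤ v → v ≤ 1 → 0 ≤ c j * (v - s₀ j) := fun v hv0 hv1 => by
    have h := hmin (Function.update s₀ j v) fun i => by
      rcases eq_or_ne i j with rfl | hij
      · simp [hv0, hv1]
      · simpa [hij] using hs₀ i
    have hsum : ∑ i, c i * Function.update s₀ j v i = ∑ i, c i * s₀ i + c j * (v - s₀ j) := by
      simp only [← Finset.add_sum_erase _ _ (Finset.mem_univ j), Function.update_self]
      rw [Finset.sum_congr rfl fun i hi => by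
        rw [Function.update_of_ne (Finset.ne_of_mem_erase hi)]]
      ring
    linarith
  rcases (hc j).lt_or_gt with hneg | hpos
  · exact .inr (le_antisymm (hs₀ j).2 (by nlinarith [hmove 1 zero_le_one le_rfl]))
  · exact .inl (le_antisymm (by nlinarith [hmove 0 le_rfl zero_le_one]) (hs₀ j).1)

theorem iSup_le_iSup_of_saddle {α σ β : Type*} [CompleteLattice β] {L : α → σ → β}
    {a₀ : α} {s₀ s : σ} (hmax : ∀ a, L a s₀ ≤ L a₀ s₀) (hmin : L a₀ s₀ ≤ L a₀ s) :
    ⨆ a, L a s₀ ≤ ⨆ a, L a s :=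
  (iSup_le hmax).trans (hmin.trans (le_iSup_of_le a₀ le_rfl))

theorem iInf_subtype_eq_of_forall_le {α β : Type*} [CompleteLattice β] {P : α → Prop}
    {F : α → β} {m : α} (hm : P m) (hmin : ∀ x, P x → F m ≤ F x) :
    ⨅ x : {x // P x}, F x = F m :=
  le_antisymm (iInf_le_of_le ⟨m, hm⟩ le_rfl) (le_iInf fun x => hmin x x.2)

theorem iInf_box_eq_iInf_boolean {ι β : Type*} [CompleteLattice β] {F : (ι → ℝ) → β}
    {s₀ : ι → ℝ} (hs₀ : ∀ j, s₀ j = 0 ∨ s₀ j = 1)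
    (hmin : ∀ s : ι → ℝ, (∀ j, 0 ≤ s j ∧ s j ≤ 1) → F s₀ ≤ F s) :
    ⨅ s : {s : ι → ℝ // ∀ j, 0 ≤ s j ∧ s j ≤ 1}, F s =
      ⨅ s : {s : ι → ℝ // ∀ j, s j = 0 ∨ s j = 1}, F s := by
  have hbox : ∀ s : ι → ℝ, (∀ j, s j = 0 ∨ s j = 1) → ∀ j, 0 ≤ s j ∧ s j ≤ 1 := fun s hs j => by
    rcases hs j with h | h <;> simp [h]
  rw [iInf_subtype_eq_of_forall_le (hbox s₀ hs₀) hmin,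
    iInf_subtype_eq_of_forall_le hs₀ fun s hs => hmin s (hbox s hs)]

theorem penalized_boolean_relaxation_tight_general
    {n p : ℕ}
    (X : Matrix (Fin n) (Fin p) ℝ) (y : Fin n → ℝ)
    (γ : ℝ) (lam : ℝ)
    (ℓ : ℝ → ℝ → ℝ) (hconv : ∀ z : ℝ, ConvexOn ℝ Set.univ (ℓ z))
    (lhat : ℝ → ℝ → EReal)
    (hlhat : ∀ z a : ℝ, lhat z a = ⨆ u : ℝ, ((u * a - ℓ z u : ℝ) : EReal))
    (f : (Fin n → ℝ) → (Fin p → ℝ) → EReal)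
    (hf : ∀ α s, f α s =
      -(∑ i, lhat (y i) (α i))
        - ((γ / 2 * ∑ j, s j * (∑ i, X i j * α i) ^ 2 : ℝ) : EReal))
    (abar : Fin n → ℝ) (sbar : Fin p → ℝ)
    (hsbar : ∀ j, 0 ≤ sbar j ∧ sbar j ≤ 1)
    (hsaddle1 : ∀ α : Fin n → ℝ,
      f α sbar + ((lam * ∑ j, sbar j : ℝ) : EReal)
        ≤ f abar sbar + ((lam * ∑ j, sbar j : ℝ) : EReal))
    (hsaddle2 : ∀ s : Fin p → ℝ, (∀ j, 0 ≤ s j ∧ s j ≤ 1) →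
      f abar sbar + ((lam * ∑ j, sbar j : ℝ) : EReal)
        ≤ f abar s + ((lam * ∑ j, s j : ℝ) : EReal))
    (hgap : ∀ j, lam - γ / 2 * (∑ i, X i j * abar i) ^ 2 ≠ 0) :
    (∀ j, sbar j = 0 ∨ sbar j = 1) ∧
    (⨅ s : {s : Fin p → ℝ // ∀ j, 0 ≤ s j ∧ s j ≤ 1},
        ⨆ α : Fin n → ℝ, f α s.1 + ((lam * ∑ j, s.1 j : ℝ) : EReal))
      =
    (⨅ s : {s : Fin p → ℝ // ∀ j, s j = 0 ∨ s j = 1},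
        ⨆ α : Fin n → ℝ, f α s.1 + ((lam * ∑ j, s.1 j : ℝ) : EReal)) := by
  obtain rfl : lhat = fun z => fenchelConj (ℓ z) := funext₂ hlhat
  obtain ⟨αfin, r, hαfin⟩ := exists_sum_fenchelConj_eq_coe fun i => hconv (y i)
  have hconj_ne_top : ∑ i, fenchelConj (ℓ (y i)) (abar i) ≠ ⊤ := fun htop => by
    have h := hsaddle1 αfin
    rw [hf, hf, htop, hαfin, EReal.neg_top, EReal.bot_sub, EReal.bot_add, le_bot_iff] at h
    exact EReal.coe_ne_bot _ (by exact_mod_cast h)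
  obtain ⟨A, hA⟩ : ∃ A : ℝ, ∑ i, fenchelConj (ℓ (y i)) (abar i) = A :=
    ⟨_, (EReal.coe_toReal hconj_ne_top (sum_fenchelConj_ne_bot _ _)).symm⟩
  have hvalue : ∀ s : Fin p → ℝ, f abar s + ((lam * ∑ j, s j : ℝ) : EReal)
      = ((-A + ∑ j, (lam - γ / 2 * (∑ i, X i j * abar i) ^ 2) * s j : ℝ) : EReal) := fun s => by
    rw [hf]
    simp only [hA]
    norm_cast
    simp only [sub_mul, Finset.sum_sub_distrib, Finset.mul_sum, mul_comm (s _), mul_assoc]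
    ring
  have hbinary := eq_zero_or_eq_one_of_minimizes_linear hgap hsbar fun s hs => by
    have h := hsaddle2 s hs
    rw [hvalue, hvalue, EReal.coe_le_coe_iff] at h
    linarith
  refine ⟨hbinary, ?_⟩
  let L (α : Fin n → ℝ) (s : Fin p → ℝ) : EReal := f α s + ((lam * ∑ j, s j : ℝ) : EReal)
  exact iInf_box_eq_iInf_boolean (F := fun s => ⨆ α, L α s) hbinary fun s hs =>
    iSup_le_iSup_of_saddle (L := L) hsaddle1 (hsaddle2 s hs)

/-- Tightness of the Boolean relaxation of the cardinality-penalized problem: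
if there is a saddle point `(abar, sbar)` such that `λ - (γ/2)(Xⱼᵀ abar)² ≠ 0` for every
`j`, then `sbar` is binary and the relaxation is tight. -/
theorem penalized_boolean_relaxation_tight
    {n p : ℕ}
    (X : Matrix (Fin n) (Fin p) ℝ) (y : Fin n → ℝ)
    (γ : ℝ) (hγ : 0 < γ) (lam : ℝ) (hlam : 0 < lam)
    (ℓ : ℝ → ℝ → ℝ) (hconv : ∀ z : ℝ, ConvexOn ℝ Set.univ (ℓ z))
    (lhat : ℝ → ℝ → EReal)
    (hlhat : ∀ z a : ℝ, lhat z a = ⨆ u : ℝ, ((u * a - ℓ z u : ℝ) : EReal))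
    (f : (Fin n → ℝ) → (Fin p → ℝ) → EReal)
    (hf : ∀ α s, f α s =
      -(∑ i, lhat (y i) (α i))
        - ((γ / 2 * ∑ j, s j * (∑ i, X i j * α i) ^ 2 : ℝ) : EReal))
    (abar : Fin n → ℝ) (sbar : Fin p → ℝ)
    (hsbar : ∀ j, 0 ≤ sbar j ∧ sbar j ≤ 1)
    (hsaddle1 : ∀ α : Fin n → ℝ,
      f α sbar + ((lam * ∑ j, sbar j : ℝ) : EReal)
        ≤ f abar sbar + ((lam * ∑ j, sbar j : ℝ) : EReal))
    (hsaddle2 : ∀ s : Fin p → ℝ, (∀ j, 0 ≤ s j ∧ s j ≤ 1) →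
      f abar sbar + ((lam * ∑ j, sbar j : ℝ) : EReal)
        ≤ f abar s + ((lam * ∑ j, s j : ℝ) : EReal))
    (hgap : ∀ j, lam - γ / 2 * (∑ i, X i j * abar i) ^ 2 ≠ 0) :
    (∀ j, sbar j = 0 ∨ sbar j = 1) ∧
    (⨅ s : {s : Fin p → ℝ // ∀ j, 0 ≤ s j ∧ s j ≤ 1},
        ⨆ α : Fin n → ℝ, f α s.1 + ((lam * ∑ j, s.1 j : ℝ) : EReal))
      =
    (⨅ s : {s : Fin p → ℝ // ∀ j, s j = 0 ∨ s j = 1},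
        ⨆ α : Fin n → ℝ, f α s.1 + ((lam * ∑ j, s.1 j : ℝ) : EReal)) :=
  penalized_boolean_relaxation_tight_general X y γ lam ℓ hconv lhat hlhat f hf abar sbar hsbar
    hsaddle1 hsaddle2 hgap
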